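/- Let k ≥ 0, r ≥ 0 and n be integers with k + r ≤ n, and let f : [0,1] → ℝ be r times continuously differentiable. Then sup_{x∈[0,1]} |(Q_n^k f)^{(r)}(x) − Q_{n−r}^k(f^{(r)})(x)| ≤ ((2k+r−1)r/(2n))·‖f^{(r)}‖ + ω(f^{(r)}, (k+r)/n). -/

import Mathlib

/-- Bernstein basis polynomial `p_{n,k}(x) = C(n,k) x^k (1-x)^{n-k}`. -/
noncomputable def bern (n k : ℕ) (x : ℝ) : ℝ :=
  (n.choose k : ℝ) * x ^ k * (1 - x) ^ (n - k)

/-- Bernstein operator `B_n(f;x) = Σ_{j=0}^n p_{n,j}(x) f(j/n)`. -/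
noncomputable def bernsteinOp (n : ℕ) (f : ℝ → ℝ) (x : ℝ) : ℝ :=
  ∑ j ∈ Finset.range (n + 1), bern n j x * f ((j : ℝ) / (n : ℝ))

/-- An antiderivative: `(antider g) x = ∫₀ˣ g(t) dt`. -/
noncomputable def antider (g : ℝ → ℝ) : ℝ → ℝ :=
  fun x => ∫ t in (0:ℝ)..x, g t

/-- The operator `Q_n^k f = (n^k (n-k)! / n!) (B_n (f^{(-k)}))^{(k)}`, where
`f^{(-k)}` is an antiderivative of order `k` of `f` (its choice does not affect
the value of `Q_n^k f`; here we take iterated integrals starting at `0`). -/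
noncomputable def Qop (n k : ℕ) (f : ℝ → ℝ) (x : ℝ) : ℝ :=
  ((n : ℝ) ^ k * ((n - k).factorial : ℝ) / (n.factorial : ℝ)) *
    iteratedDeriv k (bernsteinOp n (antider^[k] f)) x

/-- Supremum norm on `[0,1]`. -/
noncomputable def supNorm (g : ℝ → ℝ) : ℝ :=
  ⨆ x : Set.Icc (0:ℝ) 1, |g x|

/-- First modulus of continuity on `[0,1]`. -/
noncomputable def modCont (g : ℝ → ℝ) (δ : ℝ) : ℝ :=
  sSup {d : ℝ | ∃ x ∈ Set.Icc (0:ℝ) 1, ∃ y ∈ Set.Icc (0:ℝ) 1, |x - y| ≤ δ ∧ d = |g x - g y|}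


/-!
Differentiating a Bernstein polynomial lowers its degree by one and replaces its coefficients by
their forward differences (times the degree). Hence `(Q_n^k f)^{(r)}` and `Q_{n-r}^k (f^{(r)})`
are both Bernstein polynomials of degree `n-k-r`, with `j`-th coefficients `c · f^{(r)}(ξ_j)` and
`f^{(r)}(η_j)`, where `c = (n-k)! / ((n-k-r)! n^r)` and, by the mean value theorem for iterated
differences, `ξ_j ∈ [j/n, (j+k+r)/n]` and `η_j ∈ [j/(n-r), (j+k)/(n-r)]`, so that
`|ξ_j - η_j| ≤ (k+r)/n`. The Bernstein basis is a partition of unity on `[0,1]`, so the difference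
is at most `max_j |c f^{(r)}(ξ_j) - f^{(r)}(η_j)| ≤ (1-c) ‖f^{(r)}‖ + ω(f^{(r)}, (k+r)/n)`, and
`1 - c = 1 - ∏_{i<r} (1 - (k+i)/n) ≤ ∑_{i<r} (k+i)/n = (2k+r-1) r / (2n)`.
-/

open Finset fwdDiff

noncomputable def bernSum (ν : ℕ) (c : ℕ → ℝ) (x : ℝ) : ℝ :=
  ∑ j ∈ range (ν + 1), bern ν j x * c j

lemma bern_eq_eval (ν j : ℕ) : bern ν j = fun x => (bernsteinPolynomial ℝ ν j).eval x := by
  ext x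
  simp [bern, bernsteinPolynomial]

lemma bern_nonneg (ν j : ℕ) {x : ℝ} (hx : x ∈ Set.Icc (0 : ℝ) 1) : 0 ≤ bern ν j x := by
  have : 0 ≤ 1 - x := sub_nonneg.2 hx.2
  have := hx.1
  unfold bern
  positivity

lemma sum_bern (ν : ℕ) (x : ℝ) : ∑ j ∈ range (ν + 1), bern ν j x = 1 := by
  simpa [bern_eq_eval, Polynomial.eval_finsetSum] using
    congrArg (Polynomial.eval x) (bernsteinPolynomial.sum ℝ ν)

lemma hasDerivAt_bern_zero (ν : ℕ) (x : ℝ) :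
    HasDerivAt (bern (ν + 1) 0) (-(ν + 1) * bern ν 0 x) x := by
  rw [bern_eq_eval, bern_eq_eval]
  refine (Polynomial.hasDerivAt _ x).congr_deriv ?_
  simp [bernsteinPolynomial.derivative_zero]

lemma hasDerivAt_bern_succ (ν j : ℕ) (x : ℝ) :
    HasDerivAt (bern (ν + 1) (j + 1)) ((ν + 1) * (bern ν j x - bern ν (j + 1) x)) x := by
  rw [bern_eq_eval, bern_eq_eval, bern_eq_eval]
  refine (Polynomial.hasDerivAt _ x).congr_deriv ?_
  simp [bernsteinPolynomial.derivative_succ]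

lemma hasDerivAt_bernSum (ν : ℕ) (c : ℕ → ℝ) (x : ℝ) :
    HasDerivAt (bernSum (ν + 1) c) ((ν + 1) * bernSum ν (Δ_[1] c) x) x := by
  have hsplit : bernSum (ν + 1) c = fun y =>
      ∑ j ∈ range (ν + 1), bern (ν + 1) (j + 1) y * c (j + 1) + bern (ν + 1) 0 y * c 0 := by
    ext y
    exact sum_range_succ' _ _
  rw [hsplit]
  refine ((HasDerivAt.fun_sum fun j _ => (hasDerivAt_bern_succ ν j x).mul_const (c (j + 1))).add
    ((hasDerivAt_bern_zero ν x).mul_const (c 0))).congr_deriv ?_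
  -- summation by parts; the boundary term vanishes since `bern ν (ν + 1) = 0`
  have hvanish : bern ν (ν + 1) x = 0 := by simp [bern]
  have hshift := sum_range_succ' (fun j => bern ν j x * c j) (ν + 1)
  rw [sum_range_succ, hvanish, zero_mul, add_zero] at hshift
  simp only [bernSum, fwdDiff, mul_sub, sub_mul, sum_sub_distrib, mul_assoc, ← mul_sum]
  linear_combination (ν + 1 : ℝ) * hshift

lemma bernSum_smul (ν : ℕ) (a : ℝ) (c : ℕ → ℝ) (x : ℝ) :
    bernSum ν (a • c) x = a * bernSum ν c x := by
  simp only [bernSum, Pi.smul_apply, smul_eq_mul, mul_sum]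
  exact sum_congr rfl fun _ _ => by ring

lemma deriv_bernSum (ν : ℕ) (c : ℕ → ℝ) :
    deriv (bernSum (ν + 1) c) = bernSum ν (((ν + 1 : ℕ) : ℝ) • Δ_[1] c) := by
  ext x
  rw [(hasDerivAt_bernSum ν c x).deriv, bernSum_smul, Nat.cast_succ]

lemma iteratedDeriv_bernSum {m ν : ℕ} (hm : m ≤ ν) (c : ℕ → ℝ) :
    iteratedDeriv m (bernSum ν c) = bernSum (ν - m) ((ν.descFactorial m : ℝ) • Δ_[1] ^[m] c) := by
  induction m generalizing ν c with
  | zero => simp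
  | succ m ih =>
    obtain ⟨ν, rfl⟩ : ∃ μ, ν = μ + 1 := ⟨ν - 1, by omega⟩
    rw [iteratedDeriv_succ', deriv_bernSum, ih (by omega), fwdDiff_iter_const_smul, smul_smul,
      Function.iterate_succ_apply, Nat.succ_descFactorial_succ, Nat.add_sub_add_right]
    push_cast
    ring_nf

lemma fwdDiff_iter_comp {M M' G : Type*} [AddCommMonoid M] [AddCommMonoid M'] [AddCommGroup G]
    {φ : M → M'} {a : M} {h : M'} (hφ : ∀ y, φ (y + a) = φ y + h) (F : M' → G) (m : ℕ) :
    Δ_[a] ^[m] (F ∘ φ) = Δ_[h] ^[m] F ∘ φ := by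
  induction m generalizing F with
  | zero => rfl
  | succ m ih =>
    rw [Function.iterate_succ_apply, Function.iterate_succ_apply, ← ih]
    congr 1
    ext y
    simp [fwdDiff, hφ]

lemma fwdDiff_iter_comp_div (N : ℕ) (F : ℝ → ℝ) (m : ℕ) :
    Δ_[1] ^[m] (F ∘ fun j : ℕ => (j : ℝ) / N) = Δ_[(N : ℝ)⁻¹] ^[m] F ∘ fun j : ℕ => (j : ℝ) / N :=
  fwdDiff_iter_comp (fun j => by push_cast; ring) F m

/-- `N ^ m Δ_{1/N}^m F (j/N)`, that is `m!` times the divided difference of `F` at the nodes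
`j/N, …, (j+m)/N`. -/
noncomputable def scaledFwdDiff (N m : ℕ) (F : ℝ → ℝ) (j : ℕ) : ℝ :=
  (N : ℝ) ^ m * Δ_[(N : ℝ)⁻¹] ^[m] F (j / N)

lemma scaledFwdDiff_eq (N m : ℕ) (F : ℝ → ℝ) :
    scaledFwdDiff N m F = (N : ℝ) ^ m • (Δ_[(N : ℝ)⁻¹] ^[m] F ∘ fun j : ℕ => (j : ℝ) / N) :=
  rfl

lemma fwdDiff_iter_scaledFwdDiff (N k r : ℕ) (F : ℝ → ℝ) :
    (N : ℝ) ^ r • Δ_[1] ^[r] (scaledFwdDiff N k F) = scaledFwdDiff N (k + r) F := by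
  rw [scaledFwdDiff_eq, scaledFwdDiff_eq, fwdDiff_iter_const_smul, fwdDiff_iter_comp_div, smul_smul,
    ← Function.iterate_add_apply, pow_add, add_comm r k, mul_comm]

lemma Qop_eq_bernSum {n k : ℕ} (hk : k ≤ n) (f : ℝ → ℝ) :
    Qop n k f = bernSum (n - k) (scaledFwdDiff n k (antider^[k] f)) := by
  have hB : bernsteinOp n (antider^[k] f) = bernSum n (antider^[k] f ∘ fun j : ℕ => (j : ℝ) / n) :=
    rfl
  have hfac : ((n - k).factorial : ℝ) * n.descFactorial k = n.factorial := by
    exact_mod_cast Nat.factorial_mul_descFactorial hk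
  ext x
  rw [Qop, hB, iteratedDeriv_bernSum hk, fwdDiff_iter_comp_div, bernSum_smul, scaledFwdDiff_eq,
    bernSum_smul, ← mul_assoc]
  congr 1
  field_simp
  linear_combination (n : ℝ) ^ k * hfac

lemma iteratedDeriv_Qop {n k r : ℕ} (hkr : k + r ≤ n) (hn : n ≠ 0) (f : ℝ → ℝ) :
    iteratedDeriv r (Qop n k f) = bernSum (n - (k + r))
      ((((n - k).descFactorial r : ℝ) / n ^ r) • scaledFwdDiff n (k + r) (antider^[k] f)) := by
  rw [Qop_eq_bernSum (by omega), iteratedDeriv_bernSum (by omega), Nat.sub_sub,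
    ← fwdDiff_iter_scaledFwdDiff, smul_smul, div_mul_cancel₀ _ (by positivity)]

lemma hasDerivAt_antider {g : ℝ → ℝ} (hg : Continuous g) (x : ℝ) :
    HasDerivAt (antider g) (g x) x :=
  (hg.integral_hasStrictDerivAt 0 x).hasDerivAt

lemma deriv_antider {g : ℝ → ℝ} (hg : Continuous g) : deriv (antider g) = g :=
  funext fun x => (hasDerivAt_antider hg x).deriv

lemma contDiff_antider {r : ℕ} {g : ℝ → ℝ} (hg : ContDiff ℝ r g) :
    ContDiff ℝ (r + 1 : ℕ) (antider g) := by
  rw [Nat.cast_succ, contDiff_succ_iff_deriv, deriv_antider hg.continuous]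
  exact ⟨fun x => (hasDerivAt_antider hg.continuous x).differentiableAt, by simp, hg⟩

lemma contDiff_antider_iterate {r : ℕ} {f : ℝ → ℝ} (hf : ContDiff ℝ r f) (k : ℕ) :
    ContDiff ℝ (k + r : ℕ) (antider^[k] f) := by
  induction k with
  | zero => simpa using hf
  | succ k ih =>
    rw [Function.iterate_succ_apply', Nat.add_right_comm]
    exact contDiff_antider ih

lemma iteratedDeriv_antider_iterate {r : ℕ} {f : ℝ → ℝ} (hf : ContDiff ℝ r f) (k : ℕ) :
    iteratedDeriv (k + r) (antider^[k] f) = iteratedDeriv r f := by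
  induction k with
  | zero => simp
  | succ k ih =>
    rw [Function.iterate_succ_apply', Nat.add_right_comm, iteratedDeriv_succ',
      deriv_antider (contDiff_antider_iterate hf k).continuous, ih]

lemma iteratedDeriv_fwdDiff {m : ℕ} {F : ℝ → ℝ} (hF : ContDiff ℝ m F) (h : ℝ) :
    iteratedDeriv m (Δ_[h] F) = Δ_[h] (iteratedDeriv m F) := by
  ext x
  have hshift : ContDiff ℝ m fun y => F (y + h) := hF.comp (contDiff_id.add contDiff_const)
  rw [show Δ_[h] F = (fun y => F (y + h)) - F from rfl,
    iteratedDeriv_sub hshift.contDiffAt hF.contDiffAt, iteratedDeriv_comp_add_const]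
  rfl

lemma exists_fwdDiff_eq_mul_deriv {F : ℝ → ℝ} (hF : Differentiable ℝ F) {h : ℝ} (hh : 0 ≤ h)
    (t : ℝ) : ∃ ξ ∈ Set.Icc t (t + h), Δ_[h] F t = h * deriv F ξ := by
  rcases hh.eq_or_lt with rfl | hpos
  · exact ⟨t, by simp, by simp [fwdDiff]⟩
  obtain ⟨ξ, hξ, hslope⟩ := exists_deriv_eq_slope F (lt_add_of_pos_right t hpos)
    hF.continuous.continuousOn (fun y _ => (hF y).differentiableWithinAt)
  refine ⟨ξ, Set.Ioo_subset_Icc_self hξ, ?_⟩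
  rw [hslope, add_sub_cancel_left, mul_div_cancel₀ _ hpos.ne']
  rfl

theorem exists_fwdDiff_iter_eq_pow_mul_iteratedDeriv {m : ℕ} {F : ℝ → ℝ} (hF : ContDiff ℝ m F)
    {h : ℝ} (hh : 0 ≤ h) (t : ℝ) :
    ∃ ξ ∈ Set.Icc t (t + m * h), Δ_[h] ^[m] F t = h ^ m * iteratedDeriv m F ξ := by
  induction m generalizing F with
  | zero => exact ⟨t, by simp, by simp⟩
  | succ m ih =>
    have hF' : ContDiff ℝ m F := hF.of_le (by exact_mod_cast m.le_succ)
    have hΔF : ContDiff ℝ m (Δ_[h] F) :=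
      (hF'.comp (contDiff_id.add contDiff_const)).sub hF'
    obtain ⟨ξ₁, hξ₁, heq₁⟩ := ih hΔF
    obtain ⟨ξ₂, hξ₂, heq₂⟩ := exists_fwdDiff_eq_mul_deriv
      (hF.differentiable_iteratedDeriv m (by exact_mod_cast m.lt_succ_self)) hh ξ₁
    refine ⟨ξ₂, ⟨hξ₁.1.trans hξ₂.1, ?_⟩, ?_⟩
    · have := hξ₂.2; have := hξ₁.2; push_cast; linarith
    · rw [Function.iterate_succ_apply, heq₁, iteratedDeriv_fwdDiff hF', heq₂,
        iteratedDeriv_succ, pow_succ, mul_assoc]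

lemma exists_scaledFwdDiff_eq_iteratedDeriv {N m : ℕ} (hmN : m ≤ N) {F : ℝ → ℝ}
    (hF : ContDiff ℝ m F) (j : ℕ) :
    ∃ ξ ∈ Set.Icc ((j : ℝ) / N) ((j + m) / N), scaledFwdDiff N m F j = iteratedDeriv m F ξ := by
  obtain ⟨ξ, hξ, heq⟩ := exists_fwdDiff_iter_eq_pow_mul_iteratedDeriv hF
    (inv_nonneg.2 (Nat.cast_nonneg N)) ((j : ℝ) / N)
  refine ⟨ξ, by rwa [add_div, div_eq_mul_inv (m : ℝ)], ?_⟩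
  have hscale : (N : ℝ) ^ m * (N : ℝ)⁻¹ ^ m = 1 := by
    rcases N.eq_zero_or_pos with rfl | hN
    · simp [Nat.le_zero.1 hmN]
    · rw [← mul_pow, mul_inv_cancel₀ (by positivity), one_pow]
  rw [scaledFwdDiff, heq, ← mul_assoc, hscale, one_mul]

lemma abs_bernSum_sub_le {ν : ℕ} {x : ℝ} (hx : x ∈ Set.Icc (0 : ℝ) 1) {c a : ℕ → ℝ} {B : ℝ}
    (h : ∀ j ≤ ν, |c j - a j| ≤ B) : |bernSum ν c x - bernSum ν a x| ≤ B := by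
  rw [bernSum, bernSum, ← sum_sub_distrib]
  calc |∑ j ∈ range (ν + 1), (bern ν j x * c j - bern ν j x * a j)|
      ≤ ∑ j ∈ range (ν + 1), bern ν j x * B := by
        refine (abs_sum_le_sum_abs _ _).trans (sum_le_sum fun j hj => ?_)
        rw [← mul_sub, abs_mul, abs_of_nonneg (bern_nonneg ν j hx)]
        exact mul_le_mul_of_nonneg_left (h j (by simpa [Nat.lt_succ_iff] using hj))
          (bern_nonneg ν j hx)
    _ = B := by rw [← sum_mul, sum_bern, one_mul]

lemma one_sub_prod_le_sum_one_sub {ι R : Type*} [CommRing R] [PartialOrder R] [IsOrderedRing R]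
    (s : Finset ι) {a : ι → R} (h0 : ∀ i ∈ s, 0 ≤ a i) (h1 : ∀ i ∈ s, a i ≤ 1) :
    1 - ∏ i ∈ s, a i ≤ ∑ i ∈ s, (1 - a i) := by
  classical
  induction s using Finset.induction with
  | empty => simp
  | insert b s hb ih =>
    rw [prod_insert hb, sum_insert hb]
    have hP0 : 0 ≤ ∏ i ∈ s, a i := prod_nonneg fun i hi => h0 i (mem_insert_of_mem hi)
    have hP1 : ∏ i ∈ s, a i ≤ 1 :=
      prod_le_one (fun i hi => h0 i (mem_insert_of_mem hi)) fun i hi => h1 i (mem_insert_of_mem hi)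
    have hb1 : 0 ≤ 1 - a b := sub_nonneg.2 (h1 b (mem_insert_self b s))
    have ih' := ih (fun i hi => h0 i (mem_insert_of_mem hi)) fun i hi => h1 i (mem_insert_of_mem hi)
    calc 1 - a b * ∏ i ∈ s, a i = (1 - a b) * ∏ i ∈ s, a i + (1 - ∏ i ∈ s, a i) := by ring
      _ ≤ (1 - a b) + ∑ i ∈ s, (1 - a i) := add_le_add (mul_le_of_le_one_right hb1 hP1) ih'

lemma descFactorial_div_pow_eq_prod {n k r : ℕ} (hkr : k + r ≤ n) :
    ((n - k).descFactorial r : ℝ) / n ^ r = ∏ i ∈ range r, (1 - (k + i : ℝ) / n) := by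
  rw [Nat.descFactorial_eq_prod_range, Nat.cast_prod,
    show (n : ℝ) ^ r = ∏ _i ∈ range r, (n : ℝ) by simp, ← prod_div_distrib]
  refine prod_congr rfl fun i hi => ?_
  have hki : k + i < n := by have := mem_range.1 hi; omega
  have hn : (n : ℝ) ≠ 0 := by exact_mod_cast (by omega : n ≠ 0)
  rw [Nat.sub_sub, Nat.cast_sub hki.le]
  field_simp
  push_cast
  ring

lemma sum_range_natCast_add (k r : ℕ) :
    ∑ i ∈ range r, ((k : ℝ) + i) = (2 * k + r - 1) * r / 2 := by
  induction r with
  | zero => simp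
  | succ r ih => rw [sum_range_succ, ih]; push_cast; ring

lemma one_sub_descFactorial_div_pow_le {n k r : ℕ} (hkr : k + r ≤ n) :
    1 - ((n - k).descFactorial r : ℝ) / n ^ r ≤ (2 * k + r - 1) * r / (2 * n) := by
  have hfrac : ∀ i ∈ range r, 0 ≤ (k + i : ℝ) / n ∧ (k + i : ℝ) / n ≤ 1 := fun i hi => by
    have hki : k + i ≤ n := by have := mem_range.1 hi; omega
    refine ⟨by positivity, div_le_one_of_le₀ (by exact_mod_cast hki) (Nat.cast_nonneg n)⟩
  rw [descFactorial_div_pow_eq_prod hkr]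
  refine (one_sub_prod_le_sum_one_sub _ (fun i hi => sub_nonneg.2 (hfrac i hi).2)
    fun i hi => sub_le_self _ (hfrac i hi).1).trans (le_of_eq ?_)
  simp only [sub_sub_cancel, ← sum_div, sum_range_natCast_add]
  ring

lemma descFactorial_div_pow_le_one (n k r : ℕ) :
    ((n - k).descFactorial r : ℝ) / n ^ r ≤ 1 := by
  refine div_le_one_of_le₀ ?_ (by positivity)
  exact_mod_cast (Nat.descFactorial_le_pow _ r).trans (Nat.pow_le_pow_left (n.sub_le k) r)

lemma abs_mul_sub_le {c : ℝ} (hc1 : c ≤ 1) (a b : ℝ) :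
    |c * a - b| ≤ (1 - c) * |a| + |a - b| := by
  calc |c * a - b| = |(a - b) - (1 - c) * a| := by ring_nf
    _ ≤ |a - b| + |(1 - c) * a| := abs_sub _ _
    _ = (1 - c) * |a| + |a - b| := by rw [abs_mul, abs_of_nonneg (sub_nonneg.2 hc1), add_comm]

lemma Icc_div_subset_unitInterval {j m N : ℕ} (h : j + m ≤ N) :
    Set.Icc ((j : ℝ) / N) ((j + m) / N) ⊆ Set.Icc 0 1 := fun _ hξ =>
  ⟨(by positivity : (0 : ℝ) ≤ j / N).trans hξ.1,
    hξ.2.trans (div_le_one_of_le₀ (by exact_mod_cast h) (Nat.cast_nonneg N))⟩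

lemma abs_sub_le_of_mem_nodes {n k r j : ℕ} (hj : j + k + r ≤ n) {ξ η : ℝ}
    (hξ : ξ ∈ Set.Icc ((j : ℝ) / n) ((j + (k + r : ℕ)) / n))
    (hη : η ∈ Set.Icc ((j : ℝ) / (n - r : ℕ)) ((j + k) / (n - r : ℕ))) :
    |ξ - η| ≤ (k + r) / n := by
  rcases (n - r).eq_zero_or_pos with hnr | hnr
  · have hη0 : η = 0 := by simpa [hnr] using hη
    have hj0 : (j : ℝ) = 0 := by exact_mod_cast (by omega : j = 0)
    have hk0 : (k : ℝ) = 0 := by exact_mod_cast (by omega : k = 0)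
    have hξ0 : 0 ≤ ξ := by simpa [hj0] using hξ.1
    have hξ1 : ξ ≤ r / n := by simpa [hj0, hk0] using hξ.2
    rw [hη0, sub_zero, abs_of_nonneg hξ0, hk0, zero_add]
    exact hξ1
  have hn : (0 : ℝ) < n := by exact_mod_cast (by omega : 0 < n)
  have ha : (0 : ℝ) < (n - r : ℕ) := by exact_mod_cast hnr
  have hna : (n : ℝ) = (n - r : ℕ) + r := by rw [Nat.cast_sub (by omega)]; ring
  have hjka : (j : ℝ) + k ≤ (n - r : ℕ) := by exact_mod_cast (by omega : j + k ≤ n - r)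
  have hleft : (j : ℝ) / n ≤ j / (n - r : ℕ) :=
    div_le_div_of_nonneg_left (Nat.cast_nonneg j) ha (by rw [hna]; linarith [r.cast_nonneg (α := ℝ)])
  have hright : (j + k : ℝ) / (n - r : ℕ) - j / n ≤ (k + r) / n := by
    rw [div_sub_div _ _ ha.ne' hn.ne', div_le_div_iff₀ (mul_pos ha hn) hn]
    rw [hna]
    nlinarith [mul_le_mul_of_nonneg_left hjka (r.cast_nonneg : (0 : ℝ) ≤ r), ha, hn]
  push_cast at hξ
  rw [abs_sub_le_iff]
  constructor
  · linarith [hξ.2, hη.1, add_div (j : ℝ) (k + r) n]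
  · linarith [hη.2, hξ.1]

lemma supNorm_nonneg (g : ℝ → ℝ) : 0 ≤ supNorm g :=
  Real.iSup_nonneg fun _ => abs_nonneg _

lemma modCont_nonneg (g : ℝ → ℝ) (δ : ℝ) : 0 ≤ modCont g δ :=
  Real.sSup_nonneg <| by rintro _ ⟨-, -, -, -, -, rfl⟩; exact abs_nonneg _

lemma abs_le_supNorm {g : ℝ → ℝ} (hg : ContinuousOn g (Set.Icc 0 1)) {x : ℝ}
    (hx : x ∈ Set.Icc (0 : ℝ) 1) : |g x| ≤ supNorm g := by
  have hbdd := (isCompact_Icc.image_of_continuousOn hg.abs).bddAbove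
  rw [Set.image_eq_range] at hbdd
  exact le_ciSup hbdd ⟨x, hx⟩

lemma abs_sub_le_modCont {g : ℝ → ℝ} (hg : ContinuousOn g (Set.Icc 0 1)) {x y δ : ℝ}
    (hx : x ∈ Set.Icc (0 : ℝ) 1) (hy : y ∈ Set.Icc (0 : ℝ) 1) (hxy : |x - y| ≤ δ) :
    |g x - g y| ≤ modCont g δ := by
  have hcont : ContinuousOn (fun p : ℝ × ℝ => |g p.1 - g p.2|) (Set.Icc 0 1 ×ˢ Set.Icc 0 1) :=
    ((hg.comp continuousOn_fst fun _ hp => hp.1).sub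
      (hg.comp continuousOn_snd fun _ hp => hp.2)).abs
  refine le_csSup (((isCompact_Icc.prod isCompact_Icc).image_of_continuousOn hcont).bddAbove.mono
    ?_) ⟨x, hx, y, hy, hxy, rfl⟩
  rintro _ ⟨x, hx, y, hy, -, rfl⟩
  exact ⟨(x, y), ⟨hx, hy⟩, rfl⟩

theorem Qop_derivative_difference
    (n k r : ℕ) (hkr : k + r ≤ n) (f : ℝ → ℝ) (hf : ContDiff ℝ r f) :
    ∀ x ∈ Set.Icc (0:ℝ) 1,
      |iteratedDeriv r (Qop n k f) x - Qop (n - r) k (iteratedDeriv r f) x| ≤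
        (2 * (k : ℝ) + (r : ℝ) - 1) * (r : ℝ) / (2 * (n : ℝ)) * supNorm (iteratedDeriv r f)
          + modCont (iteratedDeriv r f) (((k : ℝ) + (r : ℝ)) / (n : ℝ)) := by
  intro x hx
  rcases r.eq_zero_or_pos with rfl | hr
  · simpa using modCont_nonneg _ _
  set g := iteratedDeriv r f
  have hg : Continuous g := hf.continuous_iteratedDeriv r le_rfl
  set c := ((n - k).descFactorial r : ℝ) / n ^ r
  rw [iteratedDeriv_Qop hkr (by omega), Qop_eq_bernSum (by omega : k ≤ n - r), Nat.sub_sub,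
    add_comm r k]
  refine abs_bernSum_sub_le hx fun j hj => ?_
  obtain ⟨ξ, hξ, hξg⟩ := exists_scaledFwdDiff_eq_iteratedDeriv hkr
    (contDiff_antider_iterate hf k) j
  obtain ⟨η, hη, hηg⟩ := exists_scaledFwdDiff_eq_iteratedDeriv (by omega : k ≤ n - r)
    (contDiff_antider_iterate (contDiff_zero.2 hg) k) j
  rw [iteratedDeriv_antider_iterate hf] at hξg
  rw [show iteratedDeriv k (antider^[k] g) = g by
    simpa using iteratedDeriv_antider_iterate (contDiff_zero.2 hg) k] at hηg
  have hξI := Icc_div_subset_unitInterval (by omega) hξ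
  have hηI := Icc_div_subset_unitInterval (by omega) hη
  rw [Pi.smul_apply, smul_eq_mul, hξg, hηg]
  calc |c * g ξ - g η| ≤ (1 - c) * |g ξ| + |g ξ - g η| :=
        abs_mul_sub_le (descFactorial_div_pow_le_one n k r) _ _
    _ ≤ _ := add_le_add
        ((mul_le_mul_of_nonneg_left (abs_le_supNorm hg.continuousOn hξI)
          (sub_nonneg.2 (descFactorial_div_pow_le_one n k r))).trans
          (mul_le_mul_of_nonneg_right (one_sub_descFactorial_div_pow_le hkr) (supNorm_nonneg g)))
        (abs_sub_le_modCont hg.continuousOn hξI hηI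
          (abs_sub_le_of_mem_nodes (by omega) hξ hη))
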